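/- arXiv:1210.8062 — 2 statements merged into one kernel-verified Lean document; each statement's English description precedes it below -/
import Mathlib

section
/- Let Q be a positive real number and let A_n be the (n+1)×(n+1) matrix with entries (A_n)_{i,i+1} = n - i for i = 0,...,n-1, (A_n)_{i+1,i} = (i+1)Q for i = 0,...,n-1, and all other entries zero (indices from 0 to n). Then the eigenvalues of A_n are exactly { (n - 2j)·√Q : j = 0, 1, ..., n }. -/
/-!
With `q = √Q`, the polynomial `(1 + qX)^(n-j) (1 - qX)^j` is an eigenfunction, for the eigenvalue
`(n - 2j) q`, of the differential operator `p ↦ n Q X p + (1 - Q X²) p'`. Rescaling the `i`-th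
coefficient by `i! (n - i)!` turns this operator into `A_n`, so each `(n - 2j) q` is an eigenvalue
of `A_n`. These are `n + 1` distinct numbers, and eigenvectors for distinct eigenvalues are linearly
independent, so an `(n + 1)`-dimensional space has no room for another eigenvalue.
-/

open Polynomial Matrix

theorem Matrix.setOf_exists_mulVec_eq_smul_eq_range {K ι : Type*} [Field K] [Fintype ι]
    (A : Matrix ι ι K) {μ : ι → K} (hμ : Function.Injective μ)
    (h : ∀ i, ∃ v ≠ 0, A *ᵥ v = μ i • v) :
    {x | ∃ v ≠ 0, A *ᵥ v = x • v} = Set.range μ := by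
  ext x
  refine ⟨fun ⟨v, hv0, hv⟩ => ?_, fun ⟨i, hi⟩ => hi ▸ h i⟩
  by_contra hx
  choose w hw0 hw using h
  let μ' : Option ι → K := fun o => o.elim x μ
  have hμ' : Function.Injective μ' := by
    rintro (_ | i) (_ | j) hij
    · rfl
    · exact (hx ⟨j, hij.symm⟩).elim
    · exact (hx ⟨i, hij⟩).elim
    · exact congrArg some (hμ hij)
  have hli := Module.End.eigenvectors_linearIndependent' A.mulVecLin μ' hμ'
      (Option.elim · v w) <| by
    rintro (_ | i)
    · exact ⟨Module.End.mem_eigenspace_iff.2 hv, hv0⟩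
    · exact ⟨Module.End.mem_eigenspace_iff.2 (hw i), hw0 i⟩
  simpa using hli.fintype_card_le_finrank

theorem Fin.sum_ite_val_eq {M : Type*} [AddCommMonoid M] {N : ℕ} (m : ℕ) (f : Fin N → M) :
    ∑ x : Fin N, (if m = (x : ℕ) then f x else 0) = if h : m < N then f ⟨m, h⟩ else 0 := by
  split_ifs with h
  · rw [Finset.sum_eq_single_of_mem ⟨m, h⟩ (Finset.mem_univ _)
      fun x _ hx => if_neg fun hm => hx (Fin.ext hm.symm)]
    exact if_pos rfl
  · exact Finset.sum_eq_zero fun x _ => if_neg (by omega)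

theorem Polynomial.mul_derivative_pow {R : Type*} [CommRing R] (p : R[X]) (a : ℕ) :
    p * derivative (p ^ a) = C (a : R) * p ^ a * derivative p := by
  cases a with
  | zero => simp
  | succ a => rw [derivative_pow_succ]; push_cast; ring

section Kac

variable {R : Type*} [CommRing R]

noncomputable def kacOperator (n : ℕ) (Q : R) (p : R[X]) : R[X] :=
  C (n * Q) * (X * p) + (1 - C Q * X ^ 2) * derivative p

theorem kacOperator_one_add_pow_mul_one_sub_pow (a b : ℕ) (q : R) :
    kacOperator (a + b) (q ^ 2) ((1 + C q * X) ^ a * (1 - C q * X) ^ b) =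
      C ((a - b) * q) * ((1 + C q * X) ^ a * (1 - C q * X) ^ b) := by
  have hu := mul_derivative_pow (1 + C q * X) a
  have hw := mul_derivative_pow (1 - C q * X) b
  simp only [derivative_add, derivative_sub, derivative_one, derivative_C_mul_X, zero_add,
    zero_sub, map_natCast] at hu hw
  rw [kacOperator, derivative_mul]
  simp only [map_mul, map_sub, map_natCast, map_pow, Nat.cast_add, map_add]
  linear_combination
    (1 - C q * X) * (1 - C q * X) ^ b * hu + (1 + C q * X) * (1 + C q * X) ^ a * hw

theorem coeff_kacOperator_zero (n : ℕ) (Q : R) (p : R[X]) :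
    (kacOperator n Q p).coeff 0 = p.coeff 1 := by
  simp [kacOperator, coeff_derivative, mul_coeff_zero]

theorem coeff_kacOperator_succ (n i : ℕ) (Q : R) (p : R[X]) :
    (kacOperator n Q p).coeff (i + 1) = (n - i) * Q * p.coeff i + (i + 2) * p.coeff (i + 2) := by
  have hX2 : (X ^ 2 * derivative p).coeff (i + 1) = i * p.coeff i := by
    cases i with
    | zero => simp [coeff_X_pow_mul']
    | succ i =>
      rw [show i + 1 + 1 = i + 2 by rfl, coeff_X_pow_mul, coeff_derivative]
      push_cast
      ring
  simp only [kacOperator, sub_mul, one_mul, coeff_add, coeff_sub, coeff_C_mul, coeff_X_mul,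
    mul_assoc, hX2, coeff_derivative]
  push_cast
  ring

open Nat in
noncomputable def kacVector (n : ℕ) (p : R[X]) (i : ℕ) : R := (i ! * (n - i)! : ℕ) * p.coeff i

open Nat in
theorem kacVector_recurrence {n : ℕ} {Q μ : R} {p : R[X]} (hp : kacOperator n Q p = C μ * p)
    (hdeg : p.coeff (n + 1) = 0) {i : ℕ} (hi : i ≤ n) :
    (n - i) * kacVector n p (i + 1) + i * Q * kacVector n p (i - 1) = μ * kacVector n p i := by
  have hcoeff : ∀ k, (kacOperator n Q p).coeff k = μ * p.coeff k := by simp [hp, coeff_C_mul]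
  cases i with
  | zero =>
    have h := (coeff_kacOperator_zero n Q p).symm.trans (hcoeff 0)
    cases n with
    | zero =>
      simp only [kacVector, Nat.cast_zero, sub_self, zero_mul, add_zero, Nat.sub_self,
        factorial_zero, Nat.cast_one, one_mul]
      rw [← h, hdeg]
    | succ m =>
      simp only [kacVector, h, Nat.zero_sub, Nat.sub_zero, factorial_succ, factorial_zero]
      push_cast
      ring
  | succ k =>
    have h := (coeff_kacOperator_succ n k Q p).symm.trans (hcoeff (k + 1))
    obtain ⟨m, rfl⟩ := Nat.exists_eq_add_of_le hi
    cases m with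
    | zero =>
      rw [show k + 1 + 0 + 1 = k + 2 by rfl] at hdeg
      rw [hdeg] at h
      simp only [kacVector, hdeg, Nat.add_zero, Nat.sub_self, show k + 1 - k = 1 by omega,
        show k + 1 - 1 = k by rfl]
      push_cast [factorial_succ] at h ⊢
      linear_combination ((k + 1) * k ! : R) * h
    | succ m =>
      simp only [kacVector, show k + 1 + (m + 1) - (k + 1) = m + 1 by omega,
        show k + 1 + (m + 1) - (k + 1 + 1) = m by omega, show k + 1 + (m + 1) - k = m + 2 by omega,
        show k + 1 - 1 = k by rfl]
      push_cast [factorial_succ] at h ⊢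
      linear_combination ((k + 1) * k ! * ((m + 1) * m !) : R) * h

def kacMatrix (n : ℕ) (Q : R) : Matrix (Fin (n + 1)) (Fin (n + 1)) R :=
  Matrix.of fun i j =>
    if (j : ℕ) = (i : ℕ) + 1 then (n : R) - (i : ℕ)
    else if (i : ℕ) = (j : ℕ) + 1 then ((i : ℕ) : R) * Q
    else 0

theorem kacMatrix_mulVec_apply (n : ℕ) (Q : R) (w : ℕ → R) (i : Fin (n + 1)) :
    (kacMatrix n Q *ᵥ fun k => w k) i = (n - i) * w (i + 1) + i * Q * w (i - 1) := by
  have hsplit : ∀ k : ℕ, (if k = (i : ℕ) + 1 then (n : R) - (i : ℕ)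
      else if (i : ℕ) = k + 1 then ((i : ℕ) : R) * Q else 0) * w k =
      (if (i : ℕ) + 1 = k then (n - i) * w k else 0) +
        (if (i : ℕ) - 1 = k ∧ 0 < (i : ℕ) then i * Q * w k else 0) := by
    intro k
    split_ifs <;> first | ring1 | omega
  simp only [kacMatrix, mulVec, dotProduct, of_apply, hsplit, Finset.sum_add_distrib, ite_and,
    Fin.sum_ite_val_eq]
  have hi := i.isLt
  congr 1
  · split_ifs with h
    · rfl
    · simp [show (i : ℕ) = n by omega]
  · rw [dif_pos (by omega)]
    split_ifs with h
    · rfl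
    · simp [show (i : ℕ) = 0 by omega]

theorem exists_kacMatrix_mulVec_eq_smul [CharZero R] (n : ℕ) (q : R) {j : ℕ} (hj : j ≤ n) :
    ∃ v ≠ 0, kacMatrix n (q ^ 2) *ᵥ v = (((n : R) - 2 * j) * q) • v := by
  obtain ⟨a, rfl⟩ := Nat.exists_eq_add_of_le' hj
  set p : R[X] := (1 + C q * X) ^ a * (1 - C q * X) ^ j
  have hp : kacOperator (a + j) (q ^ 2) p = C (((a + j : ℕ) - 2 * j : R) * q) * p := by
    rw [kacOperator_one_add_pow_mul_one_sub_pow]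
    congr 2
    push_cast
    ring
  have hdeg : p.coeff (a + j + 1) = 0 := by
    apply coeff_eq_zero_of_natDegree_lt
    apply Nat.lt_succ_of_le
    simp only [p]
    compute_degree
  refine ⟨fun i => kacVector (a + j) p i, fun h => ?_, ?_⟩
  · simpa [kacVector, p, coeff_zero_eq_eval_zero, Nat.factorial_ne_zero] using congr_fun h 0
  · ext i
    rw [kacMatrix_mulVec_apply, kacVector_recurrence hp hdeg (by omega)]
    rfl

end Kac

/-- The eigenvalues of the tridiagonal matrix `A_n` with superdiagonal
`n, n-1, …, 1` and subdiagonal `Q, 2Q, …, nQ` (for `Q > 0`) are exactly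
`(n - 2j)√Q` for `j = 0, …, n`. -/
theorem stmt0 (n : ℕ) (Q : ℝ) (hQ : 0 < Q)
    (A : Matrix (Fin (n + 1)) (Fin (n + 1)) ℝ)
    (hA : ∀ i j : Fin (n + 1),
      A i j =
        if (j : ℕ) = (i : ℕ) + 1 then (n : ℝ) - (i : ℕ)
        else if (i : ℕ) = (j : ℕ) + 1 then ((i : ℕ) : ℝ) * Q
        else 0) :
    {μ : ℝ | ∃ v : Fin (n + 1) → ℝ, v ≠ 0 ∧ A.mulVec v = μ • v} =
      {μ : ℝ | ∃ j : Fin (n + 1), μ = ((n : ℝ) - 2 * (j : ℕ)) * Real.sqrt Q} := by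
  obtain rfl : A = kacMatrix n (√Q ^ 2) := by
    rw [Real.sq_sqrt hQ.le]
    exact Matrix.ext hA
  have hμ : Function.Injective fun j : Fin (n + 1) => ((n : ℝ) - 2 * (j : ℕ)) * √Q := by
    intro j k hjk
    have hjk' := mul_right_cancel₀ (Real.sqrt_pos.2 hQ).ne' hjk
    exact Fin.ext (by exact_mod_cast (by linarith : ((j : ℕ) : ℝ) = k))
  rw [setOf_exists_mulVec_eq_smul_eq_range _ hμ
    fun j => exists_kacMatrix_mulVec_eq_smul n √Q (Nat.lt_succ_iff.1 j.isLt)]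
  ext μ
  simp [eq_comm]
end

section
/- Let M be the operator on the free commutative polynomial Fock space ℱ[ℙ¹] defined by M = Σ_{k>0} α_{-k}[p] α_k[p] + Q · Σ_{k>0} α_{-k}[u] α_k[u], where the operators satisfy [α_k[u], α_l[p]] = k δ_{k+l,0} and all other commutators vanish. Then on the finite-dimensional subspace of energy s (spanned by basis vectors |μ, ν⟩ with |μ| + |ν| = s), the eigenvalues of M are exactly { (|μ| - |ν|)·√Q : |μ| + |ν| = s }, counted over all ordered pairs of partitions (μ, ν) with |μ| + |ν| = s. -/
/-!
`M` preserves the multiset `L = μ + ν` of all parts, and on the sector of `L` it is a sum over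
the distinct parts `k` of commuting single-mode operators: if `L` contains `k` exactly `m` times
and `μ` contains it `j` times, `M` sends `|j⟩` to `k (j |j-1⟩ + Q (m-j) |j+1⟩)`. With `c = √Q`,
the coefficients of `(1 + cX)^a (1 - cX)^(m-a)` form an eigenvector of this operator with
eigenvalue `c (a - (m - a))`, because `f = (1 + cX)^a (1 - cX)^b` satisfies
`(1 - c²X²) f' = (c (a - b) - c² (a + b) X) f`. Products over the distinct parts give, for every
`α ≤ L`, an eigenvector of `M` with eigenvalue `(|α| - |L - α|) √Q`.

As `c ≠ 0`, these polynomials span the polynomials of degree `≤ m` (`X^t` is a multiple of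
`(p - q)^t (p + q)^(m-t)` for `p, q = 1 ± cX`), so the eigenvectors span every sector. A vector of
energy `s` therefore lies in the sum of the eigenspaces of the listed eigenvalues, and since
eigenspaces are independent, its eigenvalue, if it has one, is among them.
-/

noncomputable section

/-- The size `|μ|` of a partition recorded as a multiset of positive parts. -/
def wt (μ : Multiset ℕ+) : ℕ := (μ.map (fun a => (a : ℕ))).sum

/-- The Fock space `ℱ[ℙ¹]`, with basis `|μ,ν⟩` indexed by ordered pairs of
partitions. -/
abbrev FockP1 : Type := (Multiset ℕ+ × Multiset ℕ+) →₀ ℝ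

/-- Action on the basis vector `|μ,ν⟩` of the operator
`M = Σ_{k>0} α_{-k}[p]α_k[p] + Q Σ_{k>0} α_{-k}[u]α_k[u]`, where the modes
satisfy `[α_k[u], α_l[p]] = k δ_{k+l,0}` (all other commutators vanishing):
`M|μ,ν⟩ = Σ_k k·(count of k in μ)·|μ∖k, ν∪k⟩ + Q Σ_k k·(count of k in ν)·|μ∪k, ν∖k⟩`. -/
def msStep (Q : ℝ) (x : Multiset ℕ+ × Multiset ℕ+) : FockP1 :=
  (∑ k ∈ x.1.toFinset, (((k : ℕ) : ℝ) * (x.1.count k : ℕ)) •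
      Finsupp.single (x.1.erase k, k ::ₘ x.2) (1 : ℝ))
  + Q • ∑ k ∈ x.2.toFinset, (((k : ℕ) : ℝ) * (x.2.count k : ℕ)) •
      Finsupp.single (k ::ₘ x.1, x.2.erase k) (1 : ℝ)

/-- The operator `M_S(0,Q)` on `ℱ[ℙ¹]`. -/
def MS (Q : ℝ) : FockP1 →ₗ[ℝ] FockP1 :=
  Finsupp.lift FockP1 ℝ (Multiset ℕ+ × Multiset ℕ+) (msStep Q)

namespace Multiset

variable {α : Type*} [DecidableEq α]

lemma move_part_iff {σ ρ τ π : Multiset α} {k : α} :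
    (k ∈ σ ∧ σ.erase k = τ ∧ k ::ₘ ρ = π) ↔ (k ∈ π ∧ σ = k ::ₘ τ ∧ ρ = π.erase k) := by
  constructor
  · rintro ⟨hk, rfl, rfl⟩
    exact ⟨mem_cons_self k ρ, (cons_erase hk).symm, (erase_cons_head k ρ).symm⟩
  · rintro ⟨hk, rfl, rfl⟩
    exact ⟨mem_cons_self k τ, erase_cons_head k τ, cons_erase hk⟩

lemma sum_count_mul_ite_move_part {R : Type*} [Semiring R] (w : α → R) (σ ρ τ π : Multiset α) :
    ∑ k ∈ σ.toFinset, w k * σ.count k * (if (σ.erase k, k ::ₘ ρ) = (τ, π) then 1 else 0)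
      = ∑ k ∈ π.toFinset,
          w k * (τ.count k + 1) * (if (σ, ρ) = (k ::ₘ τ, π.erase k) then 1 else 0) := by
  simp only [mul_ite, mul_one, mul_zero, ← Finset.sum_filter]
  refine Finset.sum_congr ?_ fun k hk => ?_
  · ext k
    simpa [Prod.ext_iff, and_assoc] using move_part_iff
  · simp only [Finset.mem_filter, Prod.ext_iff] at hk
    rw [hk.2.1, count_cons_self]
    push_cast
    rfl

lemma cons_add_erase {k : α} {τ π : Multiset α} (hk : k ∈ π) : k ::ₘ τ + π.erase k = τ + π := by
  rw [cons_add, ← add_cons, cons_erase hk]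

lemma erase_add_cons {k : α} {τ π : Multiset α} (hk : k ∈ τ) : τ.erase k + k ::ₘ π = τ + π := by
  rw [add_cons, ← cons_add, cons_erase hk]

lemma toFinset_eq_filter_of_le {σ L : Multiset α} (h : σ ≤ L) :
    σ.toFinset = L.toFinset.filter (fun k => σ.count k ≠ 0) := by
  ext k
  simpa [count_ne_zero] using fun hk => mem_of_le h hk

lemma eq_iff_forall_count_eq_of_le {σ τ L : Multiset α} (hσ : σ ≤ L) (hτ : τ ≤ L) :
    σ = τ ↔ ∀ k ∈ L.toFinset, σ.count k = τ.count k := by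
  refine ⟨fun h _ _ => h ▸ rfl, fun h => ext.2 fun k => ?_⟩
  by_cases hk : k ∈ L
  · exact h k (mem_toFinset.2 hk)
  · rw [count_eq_zero.2 fun h => hk (mem_of_le hσ h), count_eq_zero.2 fun h => hk (mem_of_le hτ h)]

lemma prod_count_eq_mul_prod_erase {R : Type*} [CommMonoid R] {s : Finset α} {k : α} (hk : k ∈ s)
    (f : α → ℕ → R) {σ τ : Multiset α} (h : ∀ j ≠ k, σ.count j = τ.count j) :
    ∏ j ∈ s, f j (σ.count j) = f k (σ.count k) * ∏ j ∈ s.erase k, f j (τ.count j) := by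
  rw [← Finset.mul_prod_erase s _ hk]
  congr 1
  exact Finset.prod_congr rfl fun j hj => by rw [h j (Finset.ne_of_mem_erase hj)]

lemma sum_Iic_prod_count {R : Type*} [CommSemiring R] (L : Multiset α) (f : α → ℕ → R) :
    ∑ σ ∈ Finset.Iic L, ∏ k ∈ L.toFinset, f k (σ.count k)
      = ∏ k ∈ L.toFinset, ∑ j ∈ Finset.range (L.count k + 1), f k j := by
  rw [Finset.prod_sum]
  refine Finset.sum_nbij' (fun σ k _ => σ.count k)
    (fun p => Finsupp.toMultiset (Finsupp.indicator L.toFinset p)) ?_ ?_ ?_ ?_ ?_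
  · intro σ hσ
    simpa [Nat.lt_succ_iff] using fun k _ => count_le_of_le k (Finset.mem_Iic.1 hσ)
  · intro p hp
    simp only [Finset.mem_pi, Finset.mem_range, Nat.lt_succ_iff] at hp
    rw [Finset.mem_Iic, le_iff_count]
    intro k
    rw [Finsupp.count_toMultiset, Finsupp.indicator_apply]
    split_ifs with hk
    · exact hp k hk
    · exact Nat.zero_le _
  · intro σ hσ
    ext k
    simp only [Finsupp.count_toMultiset, Finsupp.indicator_apply]
    split_ifs with hk
    · rfl
    · exact (count_eq_zero.2 fun h => hk (mem_toFinset.2 (mem_of_le (Finset.mem_Iic.1 hσ) h))).symm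
  · intro p _
    funext k hk
    simp [Finsupp.count_toMultiset, Finsupp.indicator_apply, hk]
  · intro σ _
    exact (Finset.prod_attach L.toFinset fun k => f k (σ.count k)).symm

end Multiset

open scoped Pointwise in
lemma pow_mul_pow_mem_span_monomials {R A : Type*} [CommSemiring R] [CommSemiring A]
    [Algebra R A] {p q u v : A} (hu : u ∈ Submodule.span R {p, q})
    (hv : v ∈ Submodule.span R {p, q}) (i j : ℕ) :
    u ^ i * v ^ j ∈
      Submodule.span R (Set.range fun a : Fin (i + j + 1) => p ^ (a : ℕ) * q ^ (i + j - a)) := by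
  have hmonomials (n : ℕ) :
      ({p, q} : Set A) ^ n ⊆ Set.range fun a : Fin (n + 1) => p ^ (a : ℕ) * q ^ (n - a) := by
    induction n with
    | zero => simp
    | succ n ih =>
      rintro _ ⟨x, hx, y, hy, rfl⟩
      obtain ⟨a, rfl⟩ := ih hx
      rcases hy with rfl | rfl
      · refine ⟨a.succ, ?_⟩
        simp only [Fin.val_succ]
        rw [show n + 1 - (a + 1) = n - a by omega]
        ring
      · refine ⟨a.castSucc, ?_⟩
        simp only [Fin.val_castSucc]
        rw [show n + 1 - a = n - a + 1 by omega]
        ring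
  have h := Submodule.mul_mem_mul (Submodule.pow_mem_pow _ hu i) (Submodule.pow_mem_pow _ hv j)
  rw [← pow_add, Submodule.span_pow] at h
  exact Submodule.span_mono (hmonomials _) h

open Polynomial

def modePoly (c : ℝ) (a b : ℕ) : ℝ[X] := (1 + C c * X) ^ a * (1 - C c * X) ^ b

lemma modePoly_coeff_zero (c : ℝ) (a b : ℕ) : (modePoly c a b).coeff 0 = 1 := by
  simp [modePoly, coeff_zero_eq_eval_zero]

lemma modePoly_coeff_eq_zero (c : ℝ) {a b j : ℕ} (h : a + b < j) :
    (modePoly c a b).coeff j = 0 := by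
  refine coeff_eq_zero_of_natDegree_lt (lt_of_le_of_lt ?_ h)
  unfold modePoly
  compute_degree

lemma mul_derivative_one_add_C_mul_X_pow (d : ℝ) (a : ℕ) :
    (1 + C d * X) * derivative ((1 + C d * X) ^ a) = C (a * d) * (1 + C d * X) ^ a := by
  rcases a with _ | n
  · simp
  · rw [derivative_pow_succ, derivative_add, derivative_one, derivative_C_mul_X, map_mul]
    push_cast
    ring

/-- The differential equation `(1 - c²X²) f' = (c (a - b) - c² (a + b) X) f`, solved for `f'`
so that its coefficients can be read off. -/
lemma modePoly_derivative (c : ℝ) (a b : ℕ) :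
    derivative (modePoly c a b) = C (c * (a - b)) * modePoly c a b
      - C (c ^ 2 * (a + b)) * (X * modePoly c a b)
      + C (c ^ 2) * (X * (X * derivative (modePoly c a b))) := by
  have hp := mul_derivative_one_add_C_mul_X_pow c a
  have hq := mul_derivative_one_add_C_mul_X_pow (-c) b
  rw [map_neg, neg_mul, ← sub_eq_add_neg] at hq
  simp only [modePoly, derivative_mul, map_mul, map_pow, map_sub, map_add, map_natCast,
    map_neg] at hp hq ⊢
  linear_combination (1 - C c * X) ^ b * (1 - C c * X) * hp
    + (1 + C c * X) ^ a * (1 + C c * X) * hq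

lemma modePoly_coeff_one (c : ℝ) (a b : ℕ) :
    (modePoly c a b).coeff 1 = c * (a - b) * (modePoly c a b).coeff 0 := by
  simpa [coeff_derivative] using congrArg (coeff · 0) (modePoly_derivative c a b)

lemma modePoly_coeff_add_two (c : ℝ) (a b i : ℕ) :
    (i + 2 : ℝ) * (modePoly c a b).coeff (i + 2) + c ^ 2 * (a + b - i) * (modePoly c a b).coeff i
      = c * (a - b) * (modePoly c a b).coeff (i + 1) := by
  have h := congrArg (coeff · (i + 1)) (modePoly_derivative c a b)
  rcases i with _ | i
  · simp only [coeff_derivative, coeff_add, coeff_sub, coeff_C_mul, coeff_X_mul,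
      coeff_X_mul_zero] at h
    push_cast at h ⊢
    linear_combination h
  · simp only [coeff_derivative, coeff_add, coeff_sub, coeff_C_mul, coeff_X_mul] at h
    push_cast at h ⊢
    linear_combination h

lemma X_pow_mem_span_modePoly {c : ℝ} (hc : c ≠ 0) {t m : ℕ} (ht : t ≤ m) :
    (X ^ t : ℝ[X]) ∈
      Submodule.span ℝ (Set.range fun a : Fin (m + 1) => modePoly c a (m - a)) := by
  obtain ⟨j, rfl⟩ := Nat.exists_eq_add_of_le ht
  set p : ℝ[X] := 1 + C c * X
  set q : ℝ[X] := 1 - C c * X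
  have hsub : p - q ∈ Submodule.span ℝ {p, q} :=
    Submodule.sub_mem _ (Submodule.subset_span (by simp)) (Submodule.subset_span (by simp))
  have hadd : p + q ∈ Submodule.span ℝ {p, q} :=
    Submodule.add_mem _ (Submodule.subset_span (by simp)) (Submodule.subset_span (by simp))
  have hprod : (p - q) ^ t * (p + q) ^ j = C ((2 * c) ^ t * 2 ^ j) * X ^ t := by
    simp only [p, q, map_mul, map_pow, map_ofNat]
    ring
  have hX : (X ^ t : ℝ[X]) = ((2 * c) ^ t * 2 ^ j)⁻¹ • ((p - q) ^ t * (p + q) ^ j) := by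
    rw [hprod, smul_eq_C_mul, ← mul_assoc, ← C_mul, inv_mul_cancel₀ (by positivity), C_1, one_mul]
  rw [hX]
  exact Submodule.smul_mem _ _ (pow_mul_pow_mem_span_monomials hsub hadd t j)

lemma exists_sum_mul_modePoly_coeff_eq_ite {c : ℝ} (hc : c ≠ 0) {t m : ℕ} (ht : t ≤ m) :
    ∃ d : ℕ → ℝ, ∀ j, ∑ a ∈ Finset.range (m + 1), d a * (modePoly c a (m - a)).coeff j
      = if j = t then 1 else 0 := by
  obtain ⟨d, hd⟩ := (Submodule.mem_span_range_iff_exists_fun ℝ).1 (X_pow_mem_span_modePoly hc ht)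
  refine ⟨fun a => if h : a < m + 1 then d ⟨a, h⟩ else 0, fun j => ?_⟩
  rw [← Fin.sum_univ_eq_sum_range (fun a => (if h : a < m + 1 then d ⟨a, h⟩ else 0) * _)]
  simpa [coeff_X_pow, finsetSum_coeff, Fin.is_le] using congrArg (coeff · j) hd

lemma wt_eq_sum_map_val (μ : Multiset ℕ+) : wt μ = (μ.map PNat.val).sum := by
  simp [wt]

lemma wt_add (μ ν : Multiset ℕ+) : wt (μ + ν) = wt μ + wt ν := by
  simp [wt_eq_sum_map_val]

lemma wt_eq_sum_count {μ : Multiset ℕ+} {S : Finset ℕ+} (h : μ.toFinset ⊆ S) :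
    wt μ = ∑ k ∈ S, μ.count k * (k : ℕ) := by
  rw [wt_eq_sum_map_val, Finset.sum_multiset_map_count, Finset.sum_subset h fun k _ hk => by
    simp [Multiset.count_eq_zero.2 fun h' => hk (Multiset.mem_toFinset.2 h')]]
  simp

lemma MS_single (Q : ℝ) (x : Multiset ℕ+ × Multiset ℕ+) (r : ℝ) :
    MS Q (Finsupp.single x r) = r • msStep Q x := by
  simp [MS]

/-- The coefficient of `|τ, π⟩` in `M v` collects the two kinds of moves of one part `k`
that land on `|τ, π⟩`. -/
lemma MS_apply (Q : ℝ) (v : FockP1) (τ π : Multiset ℕ+) :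
    MS Q v (τ, π) =
      ∑ k ∈ π.toFinset, ((k : ℕ) : ℝ) * (τ.count k + 1) * v (k ::ₘ τ, π.erase k)
        + Q * ∑ k ∈ τ.toFinset, ((k : ℕ) : ℝ) * (π.count k + 1) * v (τ.erase k, k ::ₘ π) := by
  induction v using Finsupp.induction_linear with
  | zero => simp
  | add v w hv hw =>
    simp only [map_add, Finsupp.add_apply, hv, hw, mul_add, Finset.sum_add_distrib]
    ring
  | single x r =>
    have h1 := Multiset.sum_count_mul_ite_move_part (fun k : ℕ+ => ((k : ℕ) : ℝ)) x.1 x.2 τ π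
    have h2 := Multiset.sum_count_mul_ite_move_part (fun k : ℕ+ => ((k : ℕ) : ℝ)) x.2 x.1 π τ
    simp only [MS_single, msStep, Finsupp.smul_apply, Finsupp.add_apply, Finsupp.finsetSum_apply,
      Finsupp.single_apply, smul_eq_mul] at h1 h2 ⊢
    simp only [Prod.ext_iff, and_comm] at h1 h2 ⊢
    rw [mul_add, h1, h2]
    simp only [Finset.mul_sum]
    congr 1 <;> refine Finset.sum_congr rfl fun k _ => ?_ <;> split_ifs <;> ring

/-- The vector `Σ_{σ ≤ L} G σ |σ, L - σ⟩` of the sector of all pairs `(μ, ν)` with `μ + ν = L`. -/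
def sectorVec (L : Multiset ℕ+) (G : Multiset ℕ+ → ℝ) : FockP1 :=
  Finsupp.onFinset (Finset.Iic L ×ˢ Finset.Iic L) (fun x => if x.1 + x.2 = L then G x.1 else 0)
    fun x hx => by
      obtain rfl := (ite_ne_right_iff.1 hx).1
      simp

lemma sectorVec_apply (L : Multiset ℕ+) (G : Multiset ℕ+ → ℝ) (x : Multiset ℕ+ × Multiset ℕ+) :
    sectorVec L G x = if x.1 + x.2 = L then G x.1 else 0 := rfl

lemma MS_sectorVec_apply_of_add_eq (Q : ℝ) (G : Multiset ℕ+ → ℝ) (τ π : Multiset ℕ+) :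
    MS Q (sectorVec (τ + π) G) (τ, π) =
      ∑ k ∈ π.toFinset, ((k : ℕ) : ℝ) * (τ.count k + 1) * G (k ::ₘ τ)
        + Q * ∑ k ∈ τ.toFinset, ((k : ℕ) : ℝ) * (π.count k + 1) * G (τ.erase k) := by
  have h1 : ∀ k ∈ π.toFinset, sectorVec (τ + π) G (k ::ₘ τ, π.erase k) = G (k ::ₘ τ) :=
    fun k hk => by
      rw [sectorVec_apply, if_pos (Multiset.cons_add_erase (Multiset.mem_toFinset.1 hk))]
  have h2 : ∀ k ∈ τ.toFinset, sectorVec (τ + π) G (τ.erase k, k ::ₘ π) = G (τ.erase k) :=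
    fun k hk => by
      rw [sectorVec_apply, if_pos (Multiset.erase_add_cons (Multiset.mem_toFinset.1 hk))]
  rw [MS_apply]
  congr 1
  · exact Finset.sum_congr rfl fun k hk => by rw [h1 k hk]
  · rw [Finset.sum_congr rfl fun k hk => by rw [h2 k hk]]

lemma MS_sectorVec_apply_of_add_ne (Q : ℝ) {L τ π : Multiset ℕ+} (G : Multiset ℕ+ → ℝ)
    (h : τ + π ≠ L) : MS Q (sectorVec L G) (τ, π) = 0 := by
  have h1 : ∀ k ∈ π.toFinset, sectorVec L G (k ::ₘ τ, π.erase k) = 0 := fun k hk => by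
    rw [sectorVec_apply, if_neg (by rwa [Multiset.cons_add_erase (Multiset.mem_toFinset.1 hk)])]
  have h2 : ∀ k ∈ τ.toFinset, sectorVec L G (τ.erase k, k ::ₘ π) = 0 := fun k hk => by
    rw [sectorVec_apply, if_neg (by rwa [Multiset.erase_add_cons (Multiset.mem_toFinset.1 hk)])]
  rw [MS_apply, Finset.sum_eq_zero fun k hk => by rw [h1 k hk, mul_zero],
    Finset.sum_eq_zero fun k hk => by rw [h2 k hk, mul_zero], mul_zero, add_zero]

/-- The eigenvalue equation at `|j⟩` for the single-mode operator
`|j⟩ ↦ j |j-1⟩ + Q (m - j) |j+1⟩`, `m = j + n`, applied to `Σ_j f j |j⟩`. -/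
lemma single_mode_eigen_eq (Q lam : ℝ) (f : ℕ → ℝ) (j n : ℕ) (htop : f (j + n + 1) = 0)
    (hone : f 1 = lam * f 0)
    (hstep : ∀ i : ℕ, (i + 2 : ℝ) * f (i + 2) + Q * ((j + n : ℕ) - i) * f i = lam * f (i + 1)) :
    (if n = 0 then 0 else (j + 1 : ℝ) * f (j + 1))
      + Q * (if j = 0 then 0 else (n + 1 : ℝ) * f (j - 1)) = lam * f j := by
  rcases j with _ | i
  · rcases n with _ | n <;> simp_all
  · have h := hstep i
    rcases n with _ | n
    · simp only [add_zero] at htop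
      simp only [↓reduceIte, Nat.add_sub_cancel, add_eq_zero, one_ne_zero, and_false, htop] at h ⊢
      push_cast at h ⊢
      linear_combination h
    · simp only [add_eq_zero, one_ne_zero, and_false, ↓reduceIte, Nat.add_sub_cancel]
      push_cast at h ⊢
      linear_combination h

lemma MS_sectorVec_prod (Q : ℝ) (L : Multiset ℕ+) (f : ℕ+ → ℕ → ℝ) (lam : ℕ+ → ℝ)
    (htop : ∀ k ∈ L, f k (L.count k + 1) = 0) (hone : ∀ k ∈ L, f k 1 = lam k * f k 0)
    (hstep : ∀ k ∈ L, ∀ i : ℕ,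
      (i + 2 : ℝ) * f k (i + 2) + Q * (L.count k - i) * f k i = lam k * f k (i + 1)) :
    MS Q (sectorVec L fun σ => ∏ k ∈ L.toFinset, f k (σ.count k))
      = (∑ k ∈ L.toFinset, ((k : ℕ) : ℝ) * lam k) •
          sectorVec L fun σ => ∏ k ∈ L.toFinset, f k (σ.count k) := by
  ext ⟨τ, π⟩
  rw [Finsupp.smul_apply, sectorVec_apply, smul_eq_mul]
  by_cases hL : τ + π = L
  · subst hL
    rw [MS_sectorVec_apply_of_add_eq, if_pos rfl,
      Multiset.toFinset_eq_filter_of_le (Multiset.le_add_left π τ),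
      Multiset.toFinset_eq_filter_of_le (Multiset.le_add_right τ π), Finset.sum_filter,
      Finset.sum_filter, Finset.mul_sum, ← Finset.sum_add_distrib, Finset.sum_mul]
    refine Finset.sum_congr rfl fun k hk => ?_
    have hk' := Multiset.mem_toFinset.1 hk
    have hmode := single_mode_eigen_eq Q (lam k) (f k) (τ.count k) (π.count k)
      (by simpa using htop k hk') (hone k hk') (by simpa using hstep k hk')
    rw [Multiset.prod_count_eq_mul_prod_erase hk f fun j hj => Multiset.count_cons_of_ne hj τ,
      Multiset.prod_count_eq_mul_prod_erase hk f fun j hj => Multiset.count_erase_of_ne hj τ,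
      Multiset.prod_count_eq_mul_prod_erase hk f (τ := τ) fun _ _ => rfl,
      Multiset.count_cons_self, Multiset.count_erase_self]
    simp only [ne_eq, ite_not] at hmode ⊢
    split_ifs at hmode ⊢ <;>
    linear_combination (((k : ℕ) : ℝ) * ∏ j ∈ (τ + π).toFinset.erase k, f j (τ.count j)) * hmode
  · rw [MS_sectorVec_apply_of_add_ne Q _ hL, if_neg hL, mul_zero]

def eigenvec (Q : ℝ) (α L : Multiset ℕ+) : FockP1 :=
  sectorVec L fun σ =>
    ∏ k ∈ L.toFinset, (modePoly √Q (α.count k) (L.count k - α.count k)).coeff (σ.count k)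

lemma MS_eigenvec {Q : ℝ} (hQ : 0 ≤ Q) {α L : Multiset ℕ+} (hα : α ≤ L) :
    MS Q (eigenvec Q α L) = (((wt α : ℝ) - wt (L - α)) * √Q) • eigenvec Q α L := by
  have hcount (k : ℕ+) : α.count k ≤ L.count k := Multiset.count_le_of_le k hα
  rw [eigenvec, MS_sectorVec_prod Q L _ fun k => √Q * (α.count k - (L.count k - α.count k : ℕ))]
  · congr 1
    rw [wt_eq_sum_count (Multiset.toFinset_subset.2 (Multiset.subset_of_le hα)),
      wt_eq_sum_count
        (Multiset.toFinset_subset.2 (Multiset.subset_of_le (Multiset.sub_le_self L α)))]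
    push_cast
    rw [← Finset.sum_sub_distrib, Finset.sum_mul]
    refine Finset.sum_congr rfl fun k _ => ?_
    rw [Multiset.count_sub]
    ring
  · exact fun k _ => modePoly_coeff_eq_zero _ (by have := hcount k; omega)
  · exact fun k _ => modePoly_coeff_one _ _ _
  · intro k _ i
    have h := modePoly_coeff_add_two √Q (α.count k) (L.count k - α.count k) i
    rw [Real.sq_sqrt hQ] at h
    push_cast [Nat.cast_sub (hcount k)] at h ⊢
    linear_combination h

lemma eigenvec_apply_zero (Q : ℝ) (α L : Multiset ℕ+) : eigenvec Q α L (0, L) = 1 := by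
  simp [eigenvec, sectorVec_apply, modePoly_coeff_zero]

lemma add_eq_of_mem_support_eigenvec {Q : ℝ} {α L : Multiset ℕ+}
    {x : Multiset ℕ+ × Multiset ℕ+} (hx : x ∈ (eigenvec Q α L).support) : x.1 + x.2 = L := by
  by_contra h
  exact Finsupp.mem_support_iff.1 hx (if_neg h)

lemma exists_single_eq_sum_eigenvec {Q : ℝ} (hQ : 0 < Q) {τ L : Multiset ℕ+} (hτ : τ ≤ L) :
    ∃ D : Multiset ℕ+ → ℝ,
      Finsupp.single (τ, L - τ) 1 = ∑ α ∈ Finset.Iic L, D α • eigenvec Q α L := by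
  have hc : √Q ≠ 0 := (Real.sqrt_pos.2 hQ).ne'
  choose d hd using fun k => exists_sum_mul_modePoly_coeff_eq_ite hc (Multiset.count_le_of_le k hτ)
  refine ⟨fun α => ∏ k ∈ L.toFinset, d k (α.count k), ?_⟩
  ext ⟨σ, ρ⟩
  simp only [Finsupp.finsetSum_apply, Finsupp.smul_apply, smul_eq_mul, eigenvec, sectorVec_apply]
  by_cases hL : σ + ρ = L
  · subst hL
    simp only [↓reduceIte, ← Finset.prod_mul_distrib]
    rw [Multiset.sum_Iic_prod_count (σ + ρ)
        fun k j => d k j * (modePoly √Q j ((σ + ρ).count k - j)).coeff (σ.count k),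
      Finset.prod_congr rfl fun k _ => hd k (σ.count k), Finset.prod_boole, Finsupp.single_apply]
    refine if_congr ?_ rfl rfl
    rw [← Multiset.eq_iff_forall_count_eq_of_le (Multiset.le_add_right σ ρ) hτ, Prod.ext_iff]
    exact ⟨fun h => h.1.symm, by rintro rfl; exact ⟨rfl, add_tsub_cancel_left σ ρ⟩⟩
  · rw [Finsupp.single_apply, if_neg]
    · simp only [if_neg hL, mul_zero, Finset.sum_const_zero]
    · rintro ⟨⟩
      exact hL (add_tsub_cancel_of_le hτ)

def energySpectrum (Q : ℝ) (s : ℕ) : Set ℝ :=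
  {lam | ∃ μ ν : Multiset ℕ+, wt μ + wt ν = s ∧ lam = ((wt μ : ℝ) - wt ν) * √Q}

lemma eigenvec_mem_iSup_eigenspace {Q : ℝ} (hQ : 0 ≤ Q) {s : ℕ} {α L : Multiset ℕ+}
    (hα : α ≤ L) (hL : wt L = s) :
    eigenvec Q α L ∈ ⨆ lam ∈ energySpectrum Q s, Module.End.eigenspace (MS Q) lam := by
  refine (le_iSup₂ (f := fun lam _ => Module.End.eigenspace (MS Q) lam) _ ?_)
    (Module.End.mem_eigenspace_iff.2 (MS_eigenvec hQ hα))
  exact ⟨α, L - α, by rw [← wt_add, add_tsub_cancel_of_le hα, hL], rfl⟩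

lemma mem_iSup_eigenspace_of_energy {Q : ℝ} (hQ : 0 < Q) {s : ℕ} {v : FockP1}
    (hv : ∀ x ∈ v.support, wt x.1 + wt x.2 = s) :
    v ∈ ⨆ lam ∈ energySpectrum Q s, Module.End.eigenspace (MS Q) lam := by
  rw [← Finsupp.sum_single v]
  refine Submodule.finsuppSum_mem _ _ _ _ fun x hx => ?_
  rw [← mul_one (v x), ← smul_eq_mul, ← Finsupp.smul_single]
  refine Submodule.smul_mem _ _ ?_
  obtain ⟨D, hD⟩ := exists_single_eq_sum_eigenvec hQ (Multiset.le_add_right x.1 x.2)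
  rw [add_tsub_cancel_left] at hD
  rw [hD]
  refine Submodule.sum_mem _ fun α hα => Submodule.smul_mem _ _ ?_
  exact eigenvec_mem_iSup_eigenspace hQ.le (Finset.mem_Iic.1 hα)
    (by rw [wt_add, hv x (Finsupp.mem_support_iff.2 hx)])

/-- On the energy-`s` subspace of `ℱ[ℙ¹]` (spanned by the `|μ,ν⟩` with
`|μ|+|ν| = s`), the eigenvalues of `M_S(0,Q)` for `Q > 0` are exactly
`(|μ|-|ν|)·√Q` over all pairs of partitions with `|μ|+|ν| = s`. -/
theorem stmt8 (s : ℕ) (Q : ℝ) (hQ : 0 < Q) :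
    {lam : ℝ | ∃ v : FockP1, v ≠ 0 ∧
        (∀ x ∈ v.support, wt x.1 + wt x.2 = s) ∧ MS Q v = lam • v} =
      {lam : ℝ | ∃ μ ν : Multiset ℕ+, wt μ + wt ν = s ∧
        lam = ((wt μ : ℝ) - (wt ν : ℝ)) * Real.sqrt Q} := by
  ext lam
  constructor
  · rintro ⟨v, hv0, hsupp, hv⟩
    by_contra hlam
    have hdisj := (Module.End.eigenspaces_iSupIndep (MS Q)).disjoint_biSup
      (y := energySpectrum Q s) hlam
    exact hv0 (hdisj.le_bot
      ⟨Module.End.mem_eigenspace_iff.2 hv, mem_iSup_eigenspace_of_energy hQ hsupp⟩)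
  · rintro ⟨μ, ν, hs, rfl⟩
    refine ⟨eigenvec Q μ (μ + ν), fun h => by simpa [h] using eigenvec_apply_zero Q μ (μ + ν),
      fun x hx => ?_, ?_⟩
    · rw [← wt_add, add_eq_of_mem_support_eigenvec hx, wt_add, hs]
    · rw [MS_eigenvec hQ.le (Multiset.le_add_right μ ν), add_tsub_cancel_left]

end
end
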